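/- arXiv:1507.01296 — 4 statements merged into one kernel-verified Lean document; each statement's English description precedes it below -/
import Mathlib

section
/- Let f(x) = ‖x‖_α be the ℓ_α norm on ℝ^m with α ∈ [2, ∞). Then for any x ≠ 0 at which the Hessian H_f(x) of f exists, all eigenvalues of H_f(x) are nonnegative and bounded above by (α−1)/‖x‖_α when m > 1, and the Hessian is zero when m = 1. -/
open scoped BigOperators

/-- The ℓ_α norm on `ℝ^m`. -/
noncomputable def lpnorm (α : ℝ) {m : ℕ} (x : Fin m → ℝ) : ℝ :=
  (∑ i, |x i| ^ α) ^ (1 / α)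

open Filter Topology Matrix

/-!
Along the line `t ↦ x + t • v` we have `‖x + t v‖_α = φ t ^ (1/α)` with
`φ t = ∑ |x_j + t v_j|^α`, and two one-variable differentiations give the Hessian form
`vᵀ H v = (α - 1) ‖x‖_α / S² * (S T - P²)`, where `S = ∑ |x_j|^α`, `T = ∑ |x_j|^(α-2) v_j²`
and `P = ∑ x_j |x_j|^(α-2) v_j`. Cauchy–Schwarz gives `P² ≤ S T`, with equality when `m = 1`.
Dropping `P²` and using `|x_j| ≤ ‖x‖_α` gives `vᵀ H v ≤ (α - 1) / ‖x‖_α * |v|²`. Evaluating the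
form at an eigenvector turns these bounds into bounds on the eigenvalue.
-/

section SecondDerivative

variable {𝕜 E F : Type*} [NontriviallyNormedField 𝕜] [NormedAddCommGroup E] [NormedSpace 𝕜 E]
  [NormedAddCommGroup F] [NormedSpace 𝕜 F]

theorem fderiv_fderiv_apply_self_eq_of_hasDerivAt {f : E → F} {x v : E} {g' : 𝕜 → F} {c : F}
    (hf : ContDiffAt 𝕜 2 f x)
    (hg : ∀ᶠ t in 𝓝 0, HasDerivAt (fun s => f (x + s • v)) (g' t) t)
    (hg' : HasDerivAt g' c 0) :
    fderiv 𝕜 (fderiv 𝕜 f) x v v = c := by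
  have hline : ∀ t : 𝕜, HasDerivAt (fun s : 𝕜 => x + s • v) v t := fun t => by
    simpa using ((hasDerivAt_id t).smul_const v).const_add x
  have hnear : ∀ᶠ t in 𝓝 (0 : 𝕜), ContDiffAt 𝕜 2 f (x + t • v) :=
    (hline 0).continuousAt.eventually (by simpa using hf.eventually (by simp))
  have heq : (fun t => fderiv 𝕜 f (x + t • v) v) =ᶠ[𝓝 0] g' := by
    filter_upwards [hg, hnear] with t hgt ht
    exact ((ht.differentiableAt (by simp)).hasFDerivAt.comp_hasDerivAt t (hline t)).unique hgt
  have hf' : HasFDerivAt (fderiv 𝕜 f) (fderiv 𝕜 (fderiv 𝕜 f) x) (x + (0 : 𝕜) • v) := by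
    simpa using ((hf.fderiv_right (m := 1) (by norm_num)).differentiableAt (by simp)).hasFDerivAt
  have hc : HasDerivAt (fun t => fderiv 𝕜 f (x + t • v) v) (fderiv 𝕜 (fderiv 𝕜 f) x v v) (0 : 𝕜) :=
    (ContinuousLinearMap.apply 𝕜 F v).hasFDerivAt.comp_hasDerivAt (0 : 𝕜)
      (hf'.comp_hasDerivAt (0 : 𝕜) (hline 0))
  exact hc.unique (hg'.congr_of_eventuallyEq heq)

end SecondDerivative

theorem Matrix.dotProduct_mulVec_eq_of_forall_apply_single {𝕜 ι : Type*} [NontriviallyNormedField 𝕜]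
    [Fintype ι] [DecidableEq ι] {H : Matrix ι ι 𝕜} {B : (ι → 𝕜) →L[𝕜] (ι → 𝕜) →L[𝕜] 𝕜}
    (hH : ∀ i j, H i j = B (Pi.single i 1) (Pi.single j 1)) (v w : ι → 𝕜) :
    v ⬝ᵥ H *ᵥ w = B v w := by
  have : H = LinearMap.toMatrix₂' 𝕜 B.toLinearMap₁₂ := by ext i j; simp [hH]
  rw [← Matrix.toLinearMap₂'_apply', this, Matrix.toLinearMap₂'_toMatrix']
  rfl

theorem Matrix.mem_Icc_of_hasEigenvalue {n : Type*} [Fintype n] [DecidableEq n]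
    {H : Matrix n n ℝ} {a b μ : ℝ} (ha : ∀ v, a * (v ⬝ᵥ v) ≤ v ⬝ᵥ H *ᵥ v)
    (hb : ∀ v, v ⬝ᵥ H *ᵥ v ≤ b * (v ⬝ᵥ v)) (hμ : Module.End.HasEigenvalue (toLin' H) μ) :
    μ ∈ Set.Icc a b := by
  obtain ⟨v, hv⟩ := hμ.exists_hasEigenvector
  have hHv : v ⬝ᵥ H *ᵥ v = μ * (v ⬝ᵥ v) := by
    rw [← toLin'_apply, hv.apply_eq_smul, dotProduct_smul, smul_eq_mul]
  have hvv : 0 < v ⬝ᵥ v := by simpa using dotProduct_star_self_pos_iff.mpr hv.2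
  exact ⟨le_of_mul_le_mul_right (hHv ▸ ha v) hvv, le_of_mul_le_mul_right (hHv ▸ hb v) hvv⟩

theorem hasDerivAt_mul_abs_rpow {β : ℝ} (hβ : 0 ≤ β) (u : ℝ) :
    HasDerivAt (fun w : ℝ => w * |w| ^ β) ((β + 1) * |u| ^ β) u := by
  rcases eq_or_ne u 0 with rfl | hu
  · have hslope : Tendsto (fun w : ℝ => |w| ^ β) (𝓝[≠] 0) (𝓝 (|0| ^ β)) :=
      ((Real.continuousAt_rpow_const _ _ (Or.inr hβ)).comp
        continuous_abs.continuousAt).tendsto.mono_left nhdsWithin_le_nhds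
    have hβ0 : (β + 1) * |(0 : ℝ)| ^ β = |0| ^ β := by
      rcases hβ.eq_or_lt with rfl | hβ
      · simp
      · simp [Real.zero_rpow hβ.ne']
    rw [hasDerivAt_iff_tendsto_slope, hβ0]
    refine hslope.congr' ?_
    filter_upwards [self_mem_nhdsWithin] with w (hw : w ≠ 0)
    simp [slope_def_field, hw]
  · have habs := ((hasDerivAt_abs hu).rpow_const (p := β) (Or.inl (abs_ne_zero.mpr hu)))
    refine ((hasDerivAt_id' u).mul habs).congr_deriv ?_
    rw [Real.rpow_sub_one (abs_ne_zero.mpr hu)]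
    field_simp
    linear_combination β * self_mul_sign u

section LpNorm

variable {m : ℕ} {α : ℝ}

theorem lpnorm_nonneg (x : Fin m → ℝ) : 0 ≤ lpnorm α x := by
  unfold lpnorm; positivity

theorem lpnorm_rpow (hα : α ≠ 0) (x : Fin m → ℝ) : lpnorm α x ^ α = ∑ j, |x j| ^ α := by
  rw [lpnorm, one_div, Real.rpow_inv_rpow (by positivity) hα]

theorem abs_le_lpnorm (hα : 0 < α) (x : Fin m → ℝ) (j : Fin m) : |x j| ≤ lpnorm α x :=
  calc |x j| = (|x j| ^ α) ^ (1 / α) := by rw [one_div, Real.rpow_rpow_inv (abs_nonneg _) hα.ne']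
    _ ≤ lpnorm α x := by
      unfold lpnorm
      gcongr
      exact Finset.single_le_sum (f := fun j => |x j| ^ α) (fun i _ => by positivity)
        (Finset.mem_univ j)

theorem sum_abs_rpow_pos {x : Fin m → ℝ} (hx : x ≠ 0) : 0 < ∑ j, |x j| ^ α := by
  obtain ⟨j, hj⟩ := Function.ne_iff.mp hx
  exact Finset.sum_pos' (fun i _ => by positivity)
    ⟨j, Finset.mem_univ j, Real.rpow_pos_of_pos (abs_pos.mpr hj) α⟩

theorem hasDerivAt_sum_abs_rpow_line (hα : 1 < α) (x v : Fin m → ℝ) (t : ℝ) :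
    HasDerivAt (fun s => ∑ j, |(x + s • v) j| ^ α)
      (α * ∑ j, (x + t • v) j * |(x + t • v) j| ^ (α - 2) * v j) t := by
  simp only [Pi.add_apply, Pi.smul_apply, smul_eq_mul, Finset.mul_sum]
  refine HasDerivAt.fun_sum fun j _ => ?_
  refine ((hasDerivAt_abs_rpow _ hα).comp t
    (((hasDerivAt_id' t).mul_const (v j)).const_add (x j))).congr_deriv ?_
  ring

theorem hasDerivAt_sum_mul_abs_rpow_line (hα : 2 ≤ α) (x v : Fin m → ℝ) (t : ℝ) :
    HasDerivAt (fun s => ∑ j, (x + s • v) j * |(x + s • v) j| ^ (α - 2) * v j)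
      ((α - 1) * ∑ j, |(x + t • v) j| ^ (α - 2) * v j ^ 2) t := by
  simp only [Pi.add_apply, Pi.smul_apply, smul_eq_mul, Finset.mul_sum]
  refine HasDerivAt.fun_sum fun j _ => ?_
  refine (((hasDerivAt_mul_abs_rpow (by linarith) _).comp t
    (((hasDerivAt_id' t).mul_const (v j)).const_add (x j))).mul_const (v j)).congr_deriv ?_
  ring

theorem hasDerivAt_lpnorm_line (hα : 1 < α) {x v : Fin m → ℝ} {t : ℝ} (hxt : x + t • v ≠ 0) :
    HasDerivAt (fun s => lpnorm α (x + s • v))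
      (lpnorm α (x + t • v) * (∑ j, (x + t • v) j * |(x + t • v) j| ^ (α - 2) * v j) /
        ∑ j, |(x + t • v) j| ^ α) t := by
  have hS := sum_abs_rpow_pos (α := α) hxt
  refine ((hasDerivAt_sum_abs_rpow_line hα x v t).rpow_const (Or.inl hS.ne')).congr_deriv ?_
  rw [Real.rpow_sub_one hS.ne', lpnorm]
  field_simp

noncomputable def lpHessianForm (α : ℝ) (x v : Fin m → ℝ) : ℝ :=
  (α - 1) * lpnorm α x / (∑ j, |x j| ^ α) ^ 2 *
    ((∑ j, |x j| ^ α) * (∑ j, |x j| ^ (α - 2) * v j ^ 2) -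
      (∑ j, x j * |x j| ^ (α - 2) * v j) ^ 2)

theorem fderiv_fderiv_lpnorm_apply_self (hα : 2 ≤ α) {x : Fin m → ℝ} (hx : x ≠ 0)
    (hf : ContDiffAt ℝ 2 (lpnorm α) x) (v : Fin m → ℝ) :
    fderiv ℝ (fderiv ℝ (lpnorm α)) x v v = lpHessianForm α x v := by
  have hα1 : 1 < α := by linarith
  have hline : ∀ᶠ t in 𝓝 (0 : ℝ), x + t • v ≠ 0 :=
    (continuous_const.add (continuous_id.smul continuous_const)).continuousAt.eventually_ne
      (by simpa using hx)
  have hx0 : x + (0 : ℝ) • v ≠ 0 := by simpa using hx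
  refine fderiv_fderiv_apply_self_eq_of_hasDerivAt hf
    (hline.mono fun t ht => hasDerivAt_lpnorm_line hα1 ht) ?_
  have hS := sum_abs_rpow_pos (α := α) hx
  have := ((hasDerivAt_lpnorm_line hα1 hx0).mul (hasDerivAt_sum_mul_abs_rpow_line hα x v 0)).div
    (hasDerivAt_sum_abs_rpow_line hα1 x v 0) (by simpa using hS.ne')
  refine this.congr_deriv ?_
  simp only [Pi.mul_apply, zero_smul, add_zero, lpHessianForm]
  field_simp
  ring

/- Termwise equality in the Cauchy–Schwarz bound of `lpHessianForm_nonneg`; with a single term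
it makes the form vanish. -/
theorem sq_mul_abs_rpow_sub_two_mul (hα : α ≠ 0) (a b : ℝ) :
    (a * |a| ^ (α - 2) * b) ^ 2 = |a| ^ α * (|a| ^ (α - 2) * b ^ 2) := by
  rcases eq_or_ne a 0 with rfl | ha
  · simp [Real.zero_rpow hα]
  · have : |a| ^ α = a ^ 2 * |a| ^ (α - 2) := by
      rw [← sq_abs a, ← Real.rpow_natCast, ← Real.rpow_add (abs_pos.mpr ha)]
      norm_num
    rw [this]
    ring

theorem lpHessianForm_nonneg (hα : 1 ≤ α) (x v : Fin m → ℝ) : 0 ≤ lpHessianForm α x v := by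
  have hCS : (∑ j, x j * |x j| ^ (α - 2) * v j) ^ 2 ≤
      (∑ j, |x j| ^ α) * ∑ j, |x j| ^ (α - 2) * v j ^ 2 :=
    Finset.sum_sq_le_sum_mul_sum_of_sq_le_mul _ (fun j _ => by positivity)
      (fun j _ => by positivity) (fun j _ => (sq_mul_abs_rpow_sub_two_mul (by linarith) _ _).le)
  have := lpnorm_nonneg (α := α) x
  unfold lpHessianForm
  exact mul_nonneg (by positivity) (sub_nonneg.mpr hCS)

theorem lpHessianForm_fin_one (hα : α ≠ 0) (x v : Fin 1 → ℝ) : lpHessianForm α x v = 0 := by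
  simp [lpHessianForm, sq_mul_abs_rpow_sub_two_mul hα]

theorem lpHessianForm_le (hα : 2 ≤ α) {x : Fin m → ℝ} (hx : x ≠ 0) (v : Fin m → ℝ) :
    lpHessianForm α x v ≤ (α - 1) / lpnorm α x * (v ⬝ᵥ v) := by
  have hα1 : 0 ≤ α - 1 := by linarith
  have hT : ∑ j, |x j| ^ (α - 2) * v j ^ 2 ≤ lpnorm α x ^ (α - 2) * (v ⬝ᵥ v) := by
    simp only [dotProduct, ← sq, Finset.mul_sum]
    gcongr with j
    exact abs_le_lpnorm (by linarith) x j
  have hS : 0 < ∑ j, |x j| ^ α := sum_abs_rpow_pos hx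
  have hN : 0 < lpnorm α x := Real.rpow_pos_of_pos hS _
  have hSN : ∑ j, |x j| ^ α = lpnorm α x ^ (α - 2) * lpnorm α x ^ 2 := by
    rw [← Real.rpow_natCast, ← Real.rpow_add hN, ← lpnorm_rpow (by linarith)]
    norm_num
  calc lpHessianForm α x v
      ≤ (α - 1) * lpnorm α x / (∑ j, |x j| ^ α) ^ 2 *
          ((∑ j, |x j| ^ α) * ∑ j, |x j| ^ (α - 2) * v j ^ 2) := by
        unfold lpHessianForm
        gcongr
        exact sub_le_self _ (sq_nonneg _)
    _ = (α - 1) / lpnorm α x * ((∑ j, |x j| ^ (α - 2) * v j ^ 2) / lpnorm α x ^ (α - 2)) := by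
        rw [hSN]
        field_simp
    _ ≤ (α - 1) / lpnorm α x * (v ⬝ᵥ v) := by
        gcongr
        rwa [div_le_iff₀' (by positivity)]

end LpNorm

theorem hessian_lp_norm_eigenvalue_bounds_general {m : ℕ} (α : ℝ) (hα : 2 ≤ α)
    (x : Fin m → ℝ) (hx : x ≠ 0)
    (f : (Fin m → ℝ) → ℝ) (hf : ∀ y, f y = lpnorm α y)
    (hdiff : ContDiffAt ℝ 2 f x)
    (H : Matrix (Fin m) (Fin m) ℝ)
    (hH : ∀ i j, H i j =
      iteratedFDeriv ℝ 2 f x ![Pi.single i (1 : ℝ), Pi.single j (1 : ℝ)]) :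
    (∀ μ : ℝ, Module.End.HasEigenvalue (Matrix.toLin' H) μ →
      0 ≤ μ ∧ (1 < m → μ ≤ (α - 1) / lpnorm α x)) ∧ (m = 1 → H = 0) := by
  obtain rfl : f = lpnorm α := funext hf
  have hH' (i j : Fin m) :
      H i j = fderiv ℝ (fderiv ℝ (lpnorm α)) x (Pi.single i 1) (Pi.single j 1) := by
    simpa [iteratedFDeriv_two_apply] using hH i j
  have hquad (v : Fin m → ℝ) : v ⬝ᵥ H *ᵥ v = lpHessianForm α x v := by
    rw [Matrix.dotProduct_mulVec_eq_of_forall_apply_single hH',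
      fderiv_fderiv_lpnorm_apply_self hα hx hdiff]
  refine ⟨fun μ hμ => ?_, fun hm => ?_⟩
  · obtain ⟨hμ0, hμα⟩ := Matrix.mem_Icc_of_hasEigenvalue (a := 0)
      (fun v => by simpa [hquad] using lpHessianForm_nonneg (by linarith) x v)
      (fun v => (hquad v).trans_le (lpHessianForm_le hα hx v)) hμ
    exact ⟨hμ0, fun _ => hμα⟩
  · subst hm
    ext i j
    rw [Fin.fin_one_eq_zero i, Fin.fin_one_eq_zero j, hH',
      fderiv_fderiv_lpnorm_apply_self hα hx hdiff, lpHessianForm_fin_one (by linarith)]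
    rfl

/-- Eigenvalue bounds for the Hessian of the ℓ_α norm (α ∈ [2,∞)) at a point x ≠ 0
where the Hessian exists: all eigenvalues are nonnegative, bounded above by
(α−1)/‖x‖_α when m > 1, and the Hessian is zero when m = 1. -/
theorem hessian_lp_norm_eigenvalue_bounds {m : ℕ} (hm : 1 ≤ m) (α : ℝ) (hα : 2 ≤ α)
    (x : Fin m → ℝ) (hx : x ≠ 0)
    (f : (Fin m → ℝ) → ℝ) (hf : ∀ y, f y = lpnorm α y)
    (hdiff : ContDiffAt ℝ 2 f x)
    (H : Matrix (Fin m) (Fin m) ℝ)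
    (hH : ∀ i j, H i j =
      iteratedFDeriv ℝ 2 f x ![Pi.single i (1 : ℝ), Pi.single j (1 : ℝ)]) :
    (∀ μ : ℝ, Module.End.HasEigenvalue (Matrix.toLin' H) μ →
      0 ≤ μ ∧ (1 < m → μ ≤ (α - 1) / lpnorm α x)) ∧ (m = 1 → H = 0) :=
  hessian_lp_norm_eigenvalue_bounds_general α hα x hx f hf hdiff H hH
end

section
/- Restricted eigenvalue from group strong convexity: suppose X ∈ ℝ^{n×p} satisfies (1/n)‖XΔ‖² ≥ κ₁‖Δ‖² − κ₂ ρ² (∑_{j=1}^J ‖Δ_{(j)}‖₂)² for all Δ ∈ ℝ^p, with κ₁, κ₂, ρ > 0. Then for every A ⊂ {1,…,J} with |A| ≤ q and every Δ ≠ 0 in the cone C(A) = {Δ : ∑_{j∉A} w_j‖Δ_{(j)}‖₂ ≤ 3∑_{j∈A} w_j‖Δ_{(j)}‖₂}, one has ‖XΔ‖²/(n‖Δ_{(A)}‖²) ≥ κ₁ − κ₂ (1 + 3 w_max/w_min)² ρ² q. In particular if κ₂(1 + 3 w_max/w_min)² ρ² q ≤ κ₁/2 then the restricted eigenvalue constant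 κ(q) = min over such (A, Δ) of ‖XΔ‖/(√n ‖Δ_{(A)}‖) satisfies κ(q) ≥ √(κ₁/2). -/
open scoped BigOperators

/-- The Euclidean norm of the restriction of `x` to group `j` (groups given by `g`). -/
noncomputable def gnorm {p J : ℕ} (g : Fin p → Fin J) (j : Fin J) (x : Fin p → ℝ) : ℝ :=
  Real.sqrt (∑ i ∈ Finset.univ.filter (fun i => g i = j), x i ^ 2)

/-- Restricted eigenvalue from group strong convexity: if
(1/n)‖XΔ‖² ≥ κ₁‖Δ‖² − κ₂ρ²(∑_j‖Δ_{(j)}‖₂)² for all Δ, then for every |A| ≤ q and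
Δ ≠ 0 in the cone C(A), ‖XΔ‖²/(n‖Δ_{(A)}‖²) ≥ κ₁ − κ₂(1+3w_max/w_min)²ρ²q; and if
κ₂(1+3w_max/w_min)²ρ²q ≤ κ₁/2, then ‖XΔ‖/(√n‖Δ_{(A)}‖) ≥ √(κ₁/2). -/
theorem restricted_eigenvalue_from_group_strong_convexity {n p J : ℕ} (hn : 0 < n)
    (X : Matrix (Fin n) (Fin p) ℝ) (g : Fin p → Fin J)
    (w : Fin J → ℝ) (wmin wmax : ℝ) (hwmin : 0 < wmin) (hle : wmin ≤ wmax)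
    (hbound : ∀ j, w j ∈ Set.Icc wmin wmax)
    (κ1 κ2 ρ : ℝ) (hκ1 : 0 < κ1) (hκ2 : 0 < κ2) (hρ : 0 < ρ)
    (hX : ∀ Δ : Fin p → ℝ,
      κ1 * (∑ i, Δ i ^ 2) - κ2 * ρ ^ 2 * (∑ j, gnorm g j Δ) ^ 2
        ≤ (n : ℝ)⁻¹ * ∑ k, (X.mulVec Δ k) ^ 2)
    (q : ℕ) :
    (∀ A : Finset (Fin J), A.card ≤ q → ∀ Δ : Fin p → ℝ, Δ ≠ 0 →
      (∑ j ∈ Aᶜ, w j * gnorm g j Δ ≤ 3 * ∑ j ∈ A, w j * gnorm g j Δ) →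
      κ1 - κ2 * (1 + 3 * wmax / wmin) ^ 2 * ρ ^ 2 * q ≤
        (∑ k, (X.mulVec Δ k) ^ 2) /
          ((n : ℝ) * ∑ i ∈ Finset.univ.filter (fun i => g i ∈ A), Δ i ^ 2)) ∧
    (κ2 * (1 + 3 * wmax / wmin) ^ 2 * ρ ^ 2 * q ≤ κ1 / 2 →
      ∀ A : Finset (Fin J), A.card ≤ q → ∀ Δ : Fin p → ℝ, Δ ≠ 0 →
      (∑ j ∈ Aᶜ, w j * gnorm g j Δ ≤ 3 * ∑ j ∈ A, w j * gnorm g j Δ) →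
      Real.sqrt (κ1 / 2) ≤ Real.sqrt (∑ k, (X.mulVec Δ k) ^ 2) /
        (Real.sqrt n * Real.sqrt (∑ i ∈ Finset.univ.filter (fun i => g i ∈ A), Δ i ^ 2))) := by
  have hwmax : (0:ℝ) < wmax := lt_of_lt_of_le hwmin hle
  set c : ℝ := 1 + 3 * wmax / wmin with hc
  have hcpos : 0 < c := by
    rw [hc]
    have : 0 < 3 * wmax / wmin := by positivity
    linarith
  have hnpos : (0:ℝ) < (n:ℝ) := by exact_mod_cast hn
  -- key lemma: S positive and main inequality
  have key : ∀ A : Finset (Fin J), A.card ≤ q → ∀ Δ : Fin p → ℝ, Δ ≠ 0 →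
      (∑ j ∈ Aᶜ, w j * gnorm g j Δ ≤ 3 * ∑ j ∈ A, w j * gnorm g j Δ) →
      (0 < ∑ i ∈ Finset.univ.filter (fun i => g i ∈ A), Δ i ^ 2) ∧
      κ1 - κ2 * c ^ 2 * ρ ^ 2 * q ≤
        (∑ k, (X.mulVec Δ k) ^ 2) /
          ((n : ℝ) * ∑ i ∈ Finset.univ.filter (fun i => g i ∈ A), Δ i ^ 2) := by
    intro A hA Δ hΔ hcone
    set S : ℝ := ∑ i ∈ Finset.univ.filter (fun i => g i ∈ A), Δ i ^ 2 with hSdef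
    set T : ℝ := ∑ k, (X.mulVec Δ k) ^ 2 with hTdef
    have hgnn : ∀ j, 0 ≤ gnorm g j Δ := fun j => Real.sqrt_nonneg _
    have hgsq : ∀ j, gnorm g j Δ ^ 2 = ∑ i ∈ Finset.univ.filter (fun i => g i = j), Δ i ^ 2 := by
      intro j
      exact Real.sq_sqrt (Finset.sum_nonneg fun i _ => sq_nonneg _)
    -- S equals sum of squared group norms over A
    have hSfib : S = ∑ j ∈ A, gnorm g j Δ ^ 2 := by
      rw [hSdef]
      simp_rw [hgsq]
      rw [← Finset.sum_fiberwise_of_maps_to (g := g)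
        (s := Finset.univ.filter (fun i => g i ∈ A)) (t := A)
        (fun i hi => (Finset.mem_filter.mp hi).2) (fun i => Δ i ^ 2)]
      refine Finset.sum_congr rfl fun j hj => Finset.sum_congr ?_ fun _ _ => rfl
      ext i
      simp only [Finset.mem_filter, Finset.mem_univ, true_and]
      constructor
      · rintro ⟨_, h⟩; exact h
      · intro h; exact ⟨h ▸ hj, h⟩
    have hSnn : 0 ≤ S := Finset.sum_nonneg fun i _ => sq_nonneg _
    -- positivity of S
    have hSpos : 0 < S := by
      rcases hSnn.lt_or_eq with h | h
      · exact h
      exfalso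
      have hS0 : S = 0 := h.symm
      have hgA : ∀ j ∈ A, gnorm g j Δ = 0 := by
        intro j hj
        have h2 : gnorm g j Δ ^ 2 = 0 := by
          have := (Finset.sum_eq_zero_iff_of_nonneg
            (fun j _ => sq_nonneg (gnorm g j Δ))).mp (hSfib ▸ hS0) j hj
          exact this
        exact pow_eq_zero_iff (by norm_num) |>.mp h2
      have hrhs : (3 : ℝ) * ∑ j ∈ A, w j * gnorm g j Δ = 0 := by
        rw [Finset.sum_eq_zero fun j hj => by rw [hgA j hj, mul_zero]]; ring
      have hall : ∀ j, gnorm g j Δ = 0 := by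
        intro j
        by_cases hj : j ∈ A
        · exact hgA j hj
        · have hnn : ∀ j ∈ Aᶜ, 0 ≤ w j * gnorm g j Δ := fun j _ =>
            mul_nonneg (le_of_lt (lt_of_lt_of_le hwmin (hbound j).1)) (hgnn j)
          have hsum0 : ∑ j ∈ Aᶜ, w j * gnorm g j Δ = 0 :=
            le_antisymm (hrhs ▸ hcone) (Finset.sum_nonneg hnn)
          have := (Finset.sum_eq_zero_iff_of_nonneg hnn).mp hsum0 j
            (Finset.mem_compl.mpr hj)
          have hwj : 0 < w j := lt_of_lt_of_le hwmin (hbound j).1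
          exact (mul_eq_zero.mp this).resolve_left (ne_of_gt hwj)
      apply hΔ
      funext i
      have h2 : gnorm g (g i) Δ ^ 2 = 0 := by rw [hall (g i)]; ring
      rw [hgsq] at h2
      have := (Finset.sum_eq_zero_iff_of_nonneg
        (fun i _ => sq_nonneg (Δ i))).mp h2 i (by simp)
      exact pow_eq_zero_iff (by norm_num) |>.mp this
    -- cone bound: total gnorm sum ≤ c * sum over A
    have hsplit : (∑ j, gnorm g j Δ) = ∑ j ∈ A, gnorm g j Δ + ∑ j ∈ Aᶜ, gnorm g j Δ := by
      rw [Finset.sum_add_sum_compl]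
    have hAnn : 0 ≤ ∑ j ∈ A, gnorm g j Δ := Finset.sum_nonneg fun j _ => hgnn j
    have hcompl : ∑ j ∈ Aᶜ, gnorm g j Δ ≤ (3 * wmax / wmin) * ∑ j ∈ A, gnorm g j Δ := by
      have h1 : wmin * ∑ j ∈ Aᶜ, gnorm g j Δ ≤ ∑ j ∈ Aᶜ, w j * gnorm g j Δ := by
        rw [Finset.mul_sum]
        exact Finset.sum_le_sum fun j _ =>
          mul_le_mul_of_nonneg_right (hbound j).1 (hgnn j)
      have h2 : (3:ℝ) * ∑ j ∈ A, w j * gnorm g j Δ ≤ 3 * (wmax * ∑ j ∈ A, gnorm g j Δ) := by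
        have : ∑ j ∈ A, w j * gnorm g j Δ ≤ wmax * ∑ j ∈ A, gnorm g j Δ := by
          rw [Finset.mul_sum]
          exact Finset.sum_le_sum fun j _ =>
            mul_le_mul_of_nonneg_right (hbound j).2 (hgnn j)
        linarith
      have h3 : wmin * ∑ j ∈ Aᶜ, gnorm g j Δ ≤ 3 * wmax * ∑ j ∈ A, gnorm g j Δ := by
        calc wmin * ∑ j ∈ Aᶜ, gnorm g j Δ ≤ ∑ j ∈ Aᶜ, w j * gnorm g j Δ := h1
          _ ≤ 3 * ∑ j ∈ A, w j * gnorm g j Δ := hcone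
          _ ≤ 3 * (wmax * ∑ j ∈ A, gnorm g j Δ) := h2
          _ = 3 * wmax * ∑ j ∈ A, gnorm g j Δ := by ring
      rw [div_mul_eq_mul_div, le_div_iff₀ hwmin]
      linarith
    have htot : (∑ j, gnorm g j Δ) ≤ c * ∑ j ∈ A, gnorm g j Δ := by
      rw [hsplit, hc]
      have := hcompl
      nlinarith
    -- Cauchy-Schwarz
    have hCS : (∑ j ∈ A, gnorm g j Δ) ^ 2 ≤ (A.card : ℝ) * S := by
      rw [hSfib]
      exact_mod_cast sq_sum_le_card_mul_sum_sq (s := A) (f := fun j => gnorm g j Δ)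
    have h3 : (A.card : ℝ) ≤ (q : ℝ) := by exact_mod_cast hA
    have hsq : (∑ j, gnorm g j Δ) ^ 2 ≤ c ^ 2 * ((q : ℝ) * S) :=
      calc (∑ j, gnorm g j Δ) ^ 2 ≤ (c * ∑ j ∈ A, gnorm g j Δ) ^ 2 :=
            pow_le_pow_left₀ (Finset.sum_nonneg fun j _ => hgnn j) htot 2
        _ = c ^ 2 * (∑ j ∈ A, gnorm g j Δ) ^ 2 := by ring
        _ ≤ c ^ 2 * ((A.card : ℝ) * S) := mul_le_mul_of_nonneg_left hCS (sq_nonneg c)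
        _ ≤ c ^ 2 * ((q : ℝ) * S) := mul_le_mul_of_nonneg_left
            (mul_le_mul_of_nonneg_right h3 hSnn) (sq_nonneg c)
    -- total norm bound
    have hfull : S ≤ ∑ i, Δ i ^ 2 :=
      Finset.sum_le_sum_of_subset_of_nonneg (Finset.filter_subset _ _)
        (fun i _ _ => sq_nonneg _)
    have hXΔ := hX Δ
    have hTnn : 0 ≤ T := Finset.sum_nonneg fun k _ => sq_nonneg _
    have hmain : (κ1 - κ2 * c ^ 2 * ρ ^ 2 * q) * S ≤ T / n := by
      have ha : κ1 * S ≤ κ1 * (∑ i, Δ i ^ 2) :=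
        mul_le_mul_of_nonneg_left hfull hκ1.le
      have hb : κ2 * ρ ^ 2 * (∑ j, gnorm g j Δ) ^ 2 ≤ κ2 * ρ ^ 2 * (c ^ 2 * ((q:ℝ) * S)) :=
        mul_le_mul_of_nonneg_left hsq (le_of_lt (mul_pos hκ2 (pow_pos hρ 2)))
      have h2 : κ1 * S - κ2 * ρ ^ 2 * (c ^ 2 * ((q:ℝ) * S)) ≤ T / n := by
        rw [hTdef]
        calc κ1 * S - κ2 * ρ ^ 2 * (c ^ 2 * ((q:ℝ) * S))
            ≤ κ1 * (∑ i, Δ i ^ 2) - κ2 * ρ ^ 2 * (∑ j, gnorm g j Δ) ^ 2 := by linarith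
          _ ≤ (n : ℝ)⁻¹ * ∑ k, (X.mulVec Δ k) ^ 2 := hXΔ
          _ = (∑ k, (X.mulVec Δ k) ^ 2) / n := by rw [inv_mul_eq_div]
      calc (κ1 - κ2 * c ^ 2 * ρ ^ 2 * q) * S
          = κ1 * S - κ2 * ρ ^ 2 * (c ^ 2 * ((q:ℝ) * S)) := by ring
        _ ≤ T / n := h2
    refine ⟨hSpos, ?_⟩
    rw [le_div_iff₀ (mul_pos hnpos hSpos)]
    calc (κ1 - κ2 * c ^ 2 * ρ ^ 2 * q) * ((n:ℝ) * S)
        = ((κ1 - κ2 * c ^ 2 * ρ ^ 2 * q) * S) * n := by ring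
      _ ≤ (T / n) * n := mul_le_mul_of_nonneg_right hmain (le_of_lt hnpos)
      _ = T := div_mul_cancel₀ T (ne_of_gt hnpos)
  constructor
  · intro A hA Δ hΔ hcone
    exact (key A hA Δ hΔ hcone).2
  · intro hsmall A hA Δ hΔ hcone
    obtain ⟨hSpos, hbd⟩ := key A hA Δ hΔ hcone
    set S : ℝ := ∑ i ∈ Finset.univ.filter (fun i => g i ∈ A), Δ i ^ 2
    set T : ℝ := ∑ k, (X.mulVec Δ k) ^ 2 with hTdef
    have hTnn : 0 ≤ T := Finset.sum_nonneg fun k _ => sq_nonneg _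
    have h1 : κ1 / 2 ≤ T / ((n:ℝ) * S) := by
      have : κ1 / 2 ≤ κ1 - κ2 * c ^ 2 * ρ ^ 2 * q := by linarith
      linarith
    have := Real.sqrt_le_sqrt h1
    calc Real.sqrt (κ1 / 2) ≤ Real.sqrt (T / ((n:ℝ) * S)) := this
      _ = Real.sqrt T / (Real.sqrt n * Real.sqrt S) := by
          rw [Real.sqrt_div hTnn, Real.sqrt_mul hnpos.le]
end

section
/- Expected maximum of chi-squared variables: let V_1,…,V_J (J ≥ 2) be i.i.d. chi-squared random variables with d ≥ 1 degrees of freedom and V = max_j V_j. Then E(V)^{1/2} ≤ (5d)^{1/2} + (4 log J)^{1/2}, and hence E(V^{1/2}) ≤ (5d)^{1/2} + (4 log J)^{1/2}. -/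
/-!
Put `W = max_j V_j`. Since `exp (W / 4) ≤ ∑_j exp (V_j / 4)` and the chi-squared moment
generating function gives `E exp (V_j / 4) = (1 - 1/2)^(-d/2) = 2^(d/2)`, Jensen's
inequality for `exp` yields `E W ≤ 4 log (J 2^(d/2)) = 4 log J + 2 d log 2 ≤ 5 d + 4 log J`.
Both bounds then follow from `√(a + b) ≤ √a + √b` and, for the second, Jensen's inequality
`E √W ≤ √(E W)`.
-/

open MeasureTheory ProbabilityTheory Real

lemma Real.sqrt_add_le_add_sqrt (a b : ℝ) : √(a + b) ≤ √a + √b := by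
  rw [sqrt_le_iff]
  refine ⟨by positivity, ?_⟩
  have ha : a ≤ √a ^ 2 := sq_sqrt' ▸ le_max_left a 0
  have hb : b ≤ √b ^ 2 := sq_sqrt' ▸ le_max_left b 0
  nlinarith [sqrt_nonneg a, sqrt_nonneg b]

namespace ProbabilityTheory

variable {Ω ι : Type*} [MeasurableSpace Ω] {μ : Measure Ω}

lemma mgf_sq_gaussianReal {t : ℝ} (ht : t < 1 / 2) :
    mgf (fun x => x ^ 2) (gaussianReal 0 1) t = (√(1 - 2 * t))⁻¹ := by
  have hdensity : ∀ x : ℝ, gaussianPDFReal 0 1 x • exp (t * x ^ 2)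
      = (√(2 * π))⁻¹ * exp (-(1 / 2 - t) * x ^ 2) := by
    intro x
    rw [gaussianPDFReal, smul_eq_mul, mul_assoc, ← exp_add]
    congr 2
    · norm_num
    · push_cast
      ring
  rw [mgf, integral_gaussianReal_eq_integral_smul one_ne_zero]
  simp_rw [hdensity]
  rw [integral_const_mul, integral_gaussian,
    show π / (1 / 2 - t) = 2 * π / (1 - 2 * t) by field_simp,
    sqrt_div' _ (by linarith), div_eq_mul_inv, ← mul_assoc,
    inv_mul_cancel₀ (by positivity), one_mul]

lemma iIndepFun.mgf_sum_sq_of_map_eq_gaussianReal {Y : ι → Ω → ℝ}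
    (hmeas : ∀ i, Measurable (Y i)) (hindep : iIndepFun Y μ)
    (hlaw : ∀ i, μ.map (Y i) = gaussianReal 0 1) (s : Finset ι) {t : ℝ} (ht : t < 1 / 2) :
    mgf (∑ i ∈ s, fun ω => Y i ω ^ 2) μ t = (√(1 - 2 * t))⁻¹ ^ s.card := by
  have hsq : Measurable fun x : ℝ => x ^ 2 := measurable_id.pow_const 2
  change mgf (∑ i ∈ s, (fun x => x ^ 2) ∘ Y i) μ t = _
  rw [(hindep.comp (fun _ x => x ^ 2) fun _ => hsq).mgf_sum (fun i => hsq.comp (hmeas i)),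
    Finset.prod_eq_pow_card fun i _ => ?_]
  rw [← mgf_map (hmeas i).aemeasurable (by fun_prop), hlaw i, mgf_sq_gaussianReal ht]

lemma integrable_finset_sup' {s : Finset ι} (hs : s.Nonempty) {X : ι → Ω → ℝ}
    (hint : ∀ i ∈ s, Integrable (X i) μ) :
    Integrable (fun ω => s.sup' hs fun i => X i ω) μ := by
  simp_rw [← Finset.sup'_apply]
  exact Finset.sup'_induction hs X (p := (Integrable · μ)) (fun _ h₁ _ h₂ => h₁.sup h₂)
    hint

lemma mul_integral_finset_sup'_le_log_sum_mgf [IsProbabilityMeasure μ] {s : Finset ι}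
    (hs : s.Nonempty) {X : ι → Ω → ℝ} {t : ℝ} (hint : ∀ i ∈ s, Integrable (X i) μ)
    (hexp : ∀ i ∈ s, Integrable (fun ω => exp (t * X i ω)) μ) :
    t * ∫ ω, s.sup' hs (fun i => X i ω) ∂μ ≤ log (∑ i ∈ s, mgf (X i) μ t) := by
  set W := fun ω => s.sup' hs fun i => X i ω
  have hW : Integrable W μ := integrable_finset_sup' hs hint
  have hexpW : ∀ ω, exp (t * W ω) ≤ ∑ i ∈ s, exp (t * X i ω) := by
    intro ω
    obtain ⟨i, hi, hmax⟩ := Finset.exists_mem_eq_sup' hs fun i => X i ω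
    rw [show W ω = X i ω from hmax]
    exact Finset.single_le_sum (f := fun j => exp (t * X j ω)) (fun j _ => (exp_pos _).le) hi
  have hexpW_int : Integrable (fun ω => exp (t * W ω)) μ :=
    (integrable_finsetSum s hexp).mono'
      (continuous_exp.comp_aestronglyMeasurable (hW.aestronglyMeasurable.const_mul t))
      (ae_of_all _ fun ω => by simpa [abs_of_pos (exp_pos _)] using hexpW ω)
  have jensen : exp (∫ ω, t * W ω ∂μ) ≤ ∫ ω, exp (t * W ω) ∂μ :=
    convexOn_exp.map_integral_le continuous_exp.continuousOn isClosed_univ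
      (ae_of_all _ fun _ => Set.mem_univ _) (hW.const_mul t) hexpW_int
  have hsum : ∫ ω, exp (t * W ω) ∂μ ≤ ∑ i ∈ s, mgf (X i) μ t := by
    simp only [mgf]
    rw [← integral_finsetSum s hexp]
    exact integral_mono hexpW_int (integrable_finsetSum s hexp) hexpW
  rw [← integral_const_mul, le_log_iff_exp_le ((exp_pos _).trans_le (jensen.trans hsum))]
  exact jensen.trans hsum

lemma integral_sqrt_le_sqrt_integral [IsProbabilityMeasure μ] {f : Ω → ℝ}
    (hf : Integrable f μ) (hf0 : 0 ≤ᵐ[μ] f) :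
    ∫ ω, √(f ω) ∂μ ≤ √(∫ ω, f ω ∂μ) := by
  have hsqrt_int : Integrable (fun ω => √(f ω)) μ := by
    refine (hf.add (integrable_const 1)).mono'
      (continuous_sqrt.comp_aestronglyMeasurable hf.aestronglyMeasurable) ?_
    filter_upwards [hf0] with ω hω
    rw [norm_of_nonneg (sqrt_nonneg _)]
    change √(f ω) ≤ f ω + 1
    nlinarith [sq_sqrt (show 0 ≤ f ω from hω), sqrt_nonneg (f ω)]
  exact strictConcaveOn_sqrt.concaveOn.le_map_integral continuous_sqrt.continuousOn isClosed_Ici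
    hf0 hf hsqrt_int

end ProbabilityTheory

/-- Expected maximum of i.i.d. chi-squared variables: if V_1,…,V_J (J ≥ 2) are i.i.d.
chi-squared with d ≥ 1 degrees of freedom (realized as sums of squares of i.i.d.
standard Gaussians) and V = max_j V_j, then E(V)^{1/2} ≤ √(5d) + √(4 log J) and hence
E(V^{1/2}) ≤ √(5d) + √(4 log J). -/
theorem expected_max_chi_squared {Ω : Type*} [MeasurableSpace Ω]
    (μ : Measure Ω) [IsProbabilityMeasure μ]
    {J d : ℕ} (hJ : 2 ≤ J)
    (Z : Fin J × Fin d → Ω → ℝ)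
    (hmeas : ∀ q, Measurable (Z q))
    (hindep : iIndepFun Z μ)
    (hlaw : ∀ q, Measure.map (Z q) μ = gaussianReal 0 1)
    (V : Fin J → Ω → ℝ) (hV : ∀ j ω, V j ω = ∑ k, (Z (j, k) ω) ^ 2) :
    Real.sqrt (∫ ω, (Finset.univ.sup'
        (⟨⟨0, by omega⟩, Finset.mem_univ _⟩ : (Finset.univ : Finset (Fin J)).Nonempty)
        fun j => V j ω) ∂μ)
      ≤ Real.sqrt (5 * d) + Real.sqrt (4 * Real.log J) ∧
    (∫ ω, Real.sqrt (Finset.univ.sup'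
        (⟨⟨0, by omega⟩, Finset.mem_univ _⟩ : (Finset.univ : Finset (Fin J)).Nonempty)
        fun j => V j ω) ∂μ)
      ≤ Real.sqrt (5 * d) + Real.sqrt (4 * Real.log J) := by
  have hne : (Finset.univ : Finset (Fin J)).Nonempty := ⟨⟨0, by omega⟩, Finset.mem_univ _⟩
  have hmgf : ∀ j {t : ℝ}, t < 1 / 2 → mgf (V j) μ t = (√(1 - 2 * t))⁻¹ ^ d := by
    intro j t ht
    have hrow : V j = ∑ k, fun ω => Z (j, k) ω ^ 2 := by
      ext ω
      simp [hV]
    simpa [hrow] using (hindep.precomp (Prod.mk_right_injective j))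
      |>.mgf_sum_sq_of_map_eq_gaussianReal (fun k => hmeas (j, k)) (fun k => hlaw (j, k)) Finset.univ ht
  have hexp : ∀ j {t : ℝ}, t < 1 / 2 → Integrable (fun ω => exp (t * V j ω)) μ :=
    fun j t ht => mgf_pos_iff.mp <| by
      rw [hmgf j ht]
      exact pow_pos (inv_pos.mpr (sqrt_pos.mpr (by linarith))) d
  have hint : ∀ j, Integrable (V j) μ := fun j => by
    simpa using integrable_pow_of_integrable_exp_mul (t := 1 / 4) (by norm_num)
      (hexp j (by norm_num)) (hexp j (by norm_num)) 1
  have hmean : ∫ ω, Finset.univ.sup' hne (fun j => V j ω) ∂μ ≤ 5 * d + 4 * log J := by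
    have h := mul_integral_finset_sup'_le_log_sum_mgf hne (t := 1 / 4) (fun j _ => hint j)
      (fun j _ => hexp j (by norm_num))
    rw [Finset.sum_congr rfl fun j _ => hmgf j (by norm_num), Finset.sum_const,
      Finset.card_univ, Fintype.card_fin, nsmul_eq_mul, log_mul (by positivity) (by positivity),
      log_pow, log_inv] at h
    have hlog : -log √(1 - 2 * (1 / 4) : ℝ) ≤ 5 / 4 := by
      rw [show (1 - 2 * (1 / 4) : ℝ) = 2⁻¹ by norm_num, sqrt_inv, log_inv, neg_neg,
        log_sqrt zero_le_two]
      linarith [log_two_lt_d9]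
    nlinarith [mul_le_mul_of_nonneg_left hlog (Nat.cast_nonneg (α := ℝ) d)]
  have hmax_nonneg : 0 ≤ᵐ[μ] fun ω => Finset.univ.sup' hne (fun j => V j ω) :=
    ae_of_all _ fun ω => Finset.le_sup'_of_le _ (Finset.mem_univ ⟨0, by omega⟩)
      (by rw [hV]; positivity)
  have hsqrt_mean := (sqrt_le_sqrt hmean).trans (Real.sqrt_add_le_add_sqrt _ _)
  exact ⟨hsqrt_mean, (integral_sqrt_le_sqrt_integral
    (integrable_finset_sup' hne fun j _ => hint j) hmax_nonneg).trans hsqrt_mean⟩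
end

section
/- Gradient equality for the ℓ_∞ norm under margin condition: let θ ∈ ℝ^m with margin d(θ) = (|θ_{π(1)}| − |θ_{π(2)}|)/√2 > 0. Suppose β̃, δ ∈ ℝ^m and r > 0 satisfy ‖β̃ − θ‖₂ + ‖δ‖₂/r < d(θ). Then for all c₁, c₂ ∈ (0,1), the ℓ_∞ norm is differentiable at both ξ = β̃ + c₁δ/r and ξ* = θ + c₂δ/r, and ∇‖·‖_∞(ξ) = ∇‖·‖_∞(ξ*) = sgn(θ_{π(1)}) e_{π(1)}. Consequently, (‖β̃ + δ/r‖_∞ − ‖β̃‖_∞) = (‖θ + δ/r‖_∞ − ‖θ‖_∞) whenever in addition β̃_{π(1)} and θ_{π(1)} relations allow the mean value theorem; in particular the difference of differences equals 0. -/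
/-! Near `θ`, the coordinate `j` of largest modulus stays strictly dominant and keeps its sign,
so `‖·‖_∞` coincides on a Euclidean ball around `θ` with the linear form `x ↦ sgn(θ_j) x_j`.
The margin `d(θ)` carries the factor `√2` because changing two coordinates by a combined
amount `t` costs Euclidean length at least `t / √2`. Both `ξ` and `ξ*`, and the four
points entering the difference of differences, lie in the ball of radius `d(θ)`. -/

open scoped BigOperators

/-- The Euclidean norm on `ℝ^m`. -/
noncomputable def e2norm {m : ℕ} (x : Fin m → ℝ) : ℝ := Real.sqrt (∑ i, x i ^ 2)

/-- The ℓ_∞ (supremum) norm on `ℝ^m`. -/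
noncomputable def supnorm {m : ℕ} (x : Fin m → ℝ) : ℝ := ⨆ i, |x i|

section EuclideanNorm

variable {m : ℕ}

theorem e2norm_eq_norm_toLp (y : Fin m → ℝ) :
    e2norm y = ‖(WithLp.toLp 2 y : EuclideanSpace ℝ (Fin m))‖ := by
  simp only [EuclideanSpace.norm_eq, Real.norm_eq_abs, sq_abs]
  rfl

theorem e2norm_nonneg (y : Fin m → ℝ) : 0 ≤ e2norm y := Real.sqrt_nonneg _

theorem e2norm_add_le (a b : Fin m → ℝ) : e2norm (a + b) ≤ e2norm a + e2norm b := by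
  simpa only [e2norm_eq_norm_toLp, WithLp.toLp_add] using norm_add_le _ _

theorem e2norm_smul (c : ℝ) (y : Fin m → ℝ) : e2norm (c • y) = |c| * e2norm y := by
  simp only [e2norm_eq_norm_toLp, WithLp.toLp_smul, norm_smul, Real.norm_eq_abs]

theorem continuous_e2norm : Continuous (e2norm : (Fin m → ℝ) → ℝ) := by
  simp only [funext e2norm_eq_norm_toLp]
  exact continuous_norm.comp (PiLp.continuous_toLp 2 _)

theorem abs_apply_le_e2norm (y : Fin m → ℝ) (i : Fin m) : |y i| ≤ e2norm y := by
  simpa only [e2norm_eq_norm_toLp, Real.norm_eq_abs] using PiLp.norm_apply_le (WithLp.toLp 2 y) i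

theorem abs_apply_add_abs_apply_le {i k : Fin m} (hik : i ≠ k) (y : Fin m → ℝ) :
    |y i| + |y k| ≤ Real.sqrt 2 * e2norm y := by
  have hpair : y i ^ 2 + y k ^ 2 ≤ ∑ l, y l ^ 2 := by
    rw [← Finset.sum_pair (f := fun l => y l ^ 2) hik]
    exact Finset.sum_le_sum_of_subset_of_nonneg (Finset.subset_univ _)
      fun _ _ _ => sq_nonneg _
  calc |y i| + |y k| = Real.sqrt ((|y i| + |y k|) ^ 2) := by
        rw [Real.sqrt_sq (by positivity)]
    _ ≤ Real.sqrt (2 * ∑ l, y l ^ 2) := by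
        apply Real.sqrt_le_sqrt
        nlinarith [sq_nonneg (|y i| - |y k|), sq_abs (y i), sq_abs (y k)]
    _ = Real.sqrt 2 * e2norm y := Real.sqrt_mul zero_le_two _

theorem e2norm_add_smul_sub_lt {θ b δ : Fin m → ℝ} {r ρ c : ℝ} (hr : 0 < r)
    (hc0 : 0 ≤ c) (hc1 : c ≤ 1) (h : e2norm (b - θ) + e2norm δ / r < ρ) :
    e2norm (b + (c / r) • δ - θ) < ρ := by
  have hδ : e2norm ((c / r) • δ) ≤ e2norm δ / r := by
    rw [e2norm_smul, abs_of_nonneg (div_nonneg hc0 hr.le), div_mul_eq_mul_div]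
    gcongr
    exact mul_le_of_le_one_left (e2norm_nonneg δ) hc1
  calc e2norm (b + (c / r) • δ - θ) = e2norm ((b - θ) + (c / r) • δ) := by
        rw [add_sub_right_comm]
    _ ≤ e2norm (b - θ) + e2norm ((c / r) • δ) := e2norm_add_le _ _
    _ < ρ := by linarith

end EuclideanNorm

section SupNorm

variable {m : ℕ}

theorem supnorm_eq_abs_apply {x : Fin m → ℝ} {j : Fin m} (h : ∀ i, |x i| ≤ |x j|) :
    supnorm x = |x j| :=
  have : Nonempty (Fin m) := ⟨j⟩
  le_antisymm (ciSup_le h) (le_ciSup (f := fun i => |x i|) (Set.finite_range _).bddAbove j)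

variable {θ x : Fin m → ℝ} {j : Fin m} {ρ : ℝ}

theorem abs_apply_lt_abs_apply_of_margin (hgap : ∀ i ≠ j, |θ i| + Real.sqrt 2 * ρ ≤ |θ j|)
    (hx : e2norm (x - θ) < ρ) {i : Fin m} (hi : i ≠ j) : |x i| < |x j| := by
  have hpair := abs_apply_add_abs_apply_le hi (x - θ)
  simp only [Pi.sub_apply] at hpair
  have hxi : |x i| - |θ i| ≤ |x i - θ i| := abs_sub_abs_le_abs_sub _ _
  have hxj : |θ j| - |x j| ≤ |x j - θ j| := abs_sub_comm (x j) (θ j) ▸ abs_sub_abs_le_abs_sub _ _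
  have hρ : Real.sqrt 2 * e2norm (x - θ) < Real.sqrt 2 * ρ := by gcongr
  linarith [hgap i hi]

theorem supnorm_eq_sign_mul_apply_of_margin (hgap : ∀ i ≠ j, |θ i| + Real.sqrt 2 * ρ ≤ |θ j|)
    (hρ : ρ ≤ |θ j|) (hx : e2norm (x - θ) < ρ) : supnorm x = Real.sign (θ j) * x j := by
  have hmax : ∀ i, |x i| ≤ |x j| := fun i => by
    rcases eq_or_ne i j with rfl | hi
    · rfl
    · exact (abs_apply_lt_abs_apply_of_margin hgap hx hi).le
  have hxj : |x j - θ j| < |θ j| := by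
    have := abs_apply_le_e2norm (x - θ) j
    simp only [Pi.sub_apply] at this
    linarith
  rw [supnorm_eq_abs_apply hmax]
  rcases lt_trichotomy (θ j) 0 with hneg | hzero | hpos
  · rw [abs_of_neg hneg] at hxj
    rw [Real.sign_of_neg hneg, abs_of_neg (by linarith [(abs_lt.mp hxj).2])]
    ring
  · exact absurd hxj (by simp [hzero])
  · rw [abs_of_pos hpos] at hxj
    rw [Real.sign_of_pos hpos, abs_of_pos (by linarith [(abs_lt.mp hxj).1])]
    ring

theorem hasFDerivAt_supnorm_of_margin (hgap : ∀ i ≠ j, |θ i| + Real.sqrt 2 * ρ ≤ |θ j|)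
    (hρ : ρ ≤ |θ j|) (hx : e2norm (x - θ) < ρ) :
    HasFDerivAt supnorm
      (Real.sign (θ j) • (ContinuousLinearMap.proj j : (Fin m → ℝ) →L[ℝ] ℝ)) x := by
  have hball : IsOpen {y : Fin m → ℝ | e2norm (y - θ) < ρ} :=
    isOpen_lt (continuous_e2norm.comp (continuous_id.sub continuous_const)) continuous_const
  refine ContinuousLinearMap.hasFDerivAt _ |>.congr_of_eventuallyEq ?_
  filter_upwards [hball.mem_nhds hx] with y hy
  rw [supnorm_eq_sign_mul_apply_of_margin hgap hρ hy]
  rfl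

theorem supnorm_add_sub_supnorm_of_margin {b δ : Fin m → ℝ} {r : ℝ}
    (hgap : ∀ i ≠ j, |θ i| + Real.sqrt 2 * ρ ≤ |θ j|) (hρ : ρ ≤ |θ j|) (hr : 0 < r)
    (hb : e2norm (b - θ) + e2norm δ / r < ρ) :
    supnorm (b + r⁻¹ • δ) - supnorm b = Real.sign (θ j) * (r⁻¹ * δ j) := by
  have hb0 := e2norm_add_smul_sub_lt hr le_rfl zero_le_one hb
  have hb1 := e2norm_add_smul_sub_lt hr zero_le_one le_rfl hb
  rw [zero_div, zero_smul, add_zero] at hb0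
  rw [one_div] at hb1
  rw [supnorm_eq_sign_mul_apply_of_margin hgap hρ hb0,
    supnorm_eq_sign_mul_apply_of_margin hgap hρ hb1]
  simp only [Pi.add_apply, Pi.smul_apply, smul_eq_mul]
  ring

end SupNorm

theorem abs_apply_le_abs_apply_second_of_antitone {m : ℕ} {θ : Fin m → ℝ}
    {π : Equiv.Perm (Fin m)} {i0 i1 : Fin m} (hi0 : (i0 : ℕ) = 0) (hi1 : (i1 : ℕ) = 1)
    (hsort : ∀ i j : Fin m, i ≤ j → |θ (π j)| ≤ |θ (π i)|) {i : Fin m} (hi : i ≠ π i0) :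
    |θ i| ≤ |θ (π i1)| := by
  have hne : (π.symm i : ℕ) ≠ 0 := fun h0 =>
    hi (by rw [← Equiv.apply_symm_apply π i, Fin.ext (h0.trans hi0.symm)])
  simpa using hsort i1 (π.symm i) (Fin.le_def.mpr (by omega))

theorem linf_gradient_equality_margin_general {m : ℕ}
    (θ : Fin m → ℝ) (π : Equiv.Perm (Fin m))
    (i0 i1 : Fin m) (hi0 : (i0 : ℕ) = 0) (hi1 : (i1 : ℕ) = 1)
    (hsort : ∀ i j : Fin m, i ≤ j → |θ (π j)| ≤ |θ (π i)|)
    (d : ℝ) (hd : d = (|θ (π i0)| - |θ (π i1)|) / Real.sqrt 2) (hdpos : 0 < d)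
    (tb δ : Fin m → ℝ) (r : ℝ) (hr : 0 < r)
    (hcond : e2norm (tb - θ) + e2norm δ / r < d) :
    (∀ c1 ∈ Set.Ioo (0 : ℝ) 1, HasFDerivAt supnorm
        (Real.sign (θ (π i0)) • (ContinuousLinearMap.proj (π i0) : (Fin m → ℝ) →L[ℝ] ℝ))
        (tb + (c1 / r) • δ)) ∧
    (∀ c2 ∈ Set.Ioo (0 : ℝ) 1, HasFDerivAt supnorm
        (Real.sign (θ (π i0)) • (ContinuousLinearMap.proj (π i0) : (Fin m → ℝ) →L[ℝ] ℝ))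
        (θ + (c2 / r) • δ)) ∧
    (supnorm (tb + r⁻¹ • δ) - supnorm tb) - (supnorm (θ + r⁻¹ • δ) - supnorm θ) = 0 := by
  have hmargin : Real.sqrt 2 * d = |θ (π i0)| - |θ (π i1)| := by
    rw [hd]; field_simp
  have hgap : ∀ i ≠ π i0, |θ i| + Real.sqrt 2 * d ≤ |θ (π i0)| := fun i hi => by
    linarith [abs_apply_le_abs_apply_second_of_antitone hi0 hi1 hsort hi]
  have hd_le : d ≤ |θ (π i0)| := by
    nlinarith [abs_nonneg (θ (π i1)), Real.one_lt_sqrt_two, hdpos]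
  have hcondθ : e2norm (θ - θ) + e2norm δ / r < d := by
    rw [sub_self, show e2norm (0 : Fin m → ℝ) = 0 by simp [e2norm]]
    linarith [e2norm_nonneg (tb - θ)]
  refine ⟨fun c hc => ?_, fun c hc => ?_, by
    rw [supnorm_add_sub_supnorm_of_margin hgap hd_le hr hcond,
      supnorm_add_sub_supnorm_of_margin hgap hd_le hr hcondθ, sub_self]⟩
  · exact hasFDerivAt_supnorm_of_margin hgap hd_le
      (e2norm_add_smul_sub_lt hr hc.1.le hc.2.le hcond)
  · simpa using hasFDerivAt_supnorm_of_margin hgap hd_le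
      (e2norm_add_smul_sub_lt hr hc.1.le hc.2.le hcondθ)

/-- Gradient equality for the ℓ_∞ norm under a margin condition: if
‖β̃−θ‖₂ + ‖δ‖₂/r < d(θ) with d(θ) = (|θ_{π(1)}|−|θ_{π(2)}|)/√2 > 0, then for all
c₁, c₂ ∈ (0,1) the ℓ_∞ norm is differentiable at ξ = β̃ + c₁δ/r and ξ* = θ + c₂δ/r
with common gradient sgn(θ_{π(1)}) e_{π(1)}, and consequently
(‖β̃+δ/r‖_∞ − ‖β̃‖_∞) − (‖θ+δ/r‖_∞ − ‖θ‖_∞) = 0. -/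
theorem linf_gradient_equality_margin {m : ℕ} (hm : 2 ≤ m)
    (θ : Fin m → ℝ) (π : Equiv.Perm (Fin m))
    (i0 i1 : Fin m) (hi0 : (i0 : ℕ) = 0) (hi1 : (i1 : ℕ) = 1)
    (hsort : ∀ i j : Fin m, i ≤ j → |θ (π j)| ≤ |θ (π i)|)
    (d : ℝ) (hd : d = (|θ (π i0)| - |θ (π i1)|) / Real.sqrt 2) (hdpos : 0 < d)
    (tb δ : Fin m → ℝ) (r : ℝ) (hr : 0 < r)
    (hcond : e2norm (tb - θ) + e2norm δ / r < d) :
    (∀ c1 ∈ Set.Ioo (0 : ℝ) 1, HasFDerivAt supnorm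
        (Real.sign (θ (π i0)) • (ContinuousLinearMap.proj (π i0) : (Fin m → ℝ) →L[ℝ] ℝ))
        (tb + (c1 / r) • δ)) ∧
    (∀ c2 ∈ Set.Ioo (0 : ℝ) 1, HasFDerivAt supnorm
        (Real.sign (θ (π i0)) • (ContinuousLinearMap.proj (π i0) : (Fin m → ℝ) →L[ℝ] ℝ))
        (θ + (c2 / r) • δ)) ∧
    (supnorm (tb + r⁻¹ • δ) - supnorm tb) - (supnorm (θ + r⁻¹ • δ) - supnorm θ) = 0 :=
  linf_gradient_equality_margin_general θ π i0 i1 hi0 hi1 hsort d hd hdpos tb δ r hr hcond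
end
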